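/- arXiv:2005.04688 — 4 statements merged into one kernel-verified Lean document; each statement's English description precedes it below -/
import Mathlib

section
/- There are no real numbers θ₁, θ₂ such that exp(i·θ₁) and exp(i·θ₂) are primitive 9th roots of unity (i.e., θ₁, θ₂ ∈ {2πk/9 : gcd(k,9)=1}), 4(1−cos θ₁)(1−cos θ₂) is an integer, and 2(cos θ₁ + cos θ₂) is an integer. -/
/-! If `ζ = e^{iθ}` is a primitive 9th root of unity then `2 cos θ = ζ + ζ⁻¹` is a root of
`x³ - 3x + 1`, since `(ζ + ζ⁻¹)³ - 3(ζ + ζ⁻¹) + 1 = ζ⁻³(ζ⁶ + ζ³ + 1)` and `ζ³` is a primitive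
cube root of unity. This cubic has no rational root (`x³ - 3x + 1` is odd on integers), yet two
of its roots with integral sum `n` would produce one. -/

theorem IsPrimitiveRoot.add_inv_cube_sub_three_mul_add_one {K : Type*} [Field K] {ζ : K}
    (h : IsPrimitiveRoot ζ 9) : (ζ + ζ⁻¹) ^ 3 - 3 * (ζ + ζ⁻¹) + 1 = 0 := by
  have hζ : ζ ≠ 0 := h.ne_zero (by norm_num)
  have hcube : (ζ ^ 3) ^ 2 + ζ ^ 3 + 1 = 0 := by
    have := (h.pow (by norm_num) (by norm_num : 9 = 3 * 3)).geom_sum_eq_zero (by norm_num)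
    simp only [Finset.sum_range_succ, Finset.sum_range_zero, pow_zero, pow_one] at this
    linear_combination this
  calc (ζ + ζ⁻¹) ^ 3 - 3 * (ζ + ζ⁻¹) + 1 = ζ⁻¹ ^ 3 * ((ζ ^ 3) ^ 2 + ζ ^ 3 + 1) := by
        field_simp; ring
    _ = 0 := by rw [hcube, mul_zero]

theorem two_mul_cos_cube_sub_three_mul_add_one {θ : ℝ}
    (h : IsPrimitiveRoot (Complex.exp (θ * Complex.I)) 9) :
    (2 * Real.cos θ) ^ 3 - 3 * (2 * Real.cos θ) + 1 = 0 := by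
  have hcos : ((2 * Real.cos θ : ℝ) : ℂ) =
      Complex.exp (θ * Complex.I) + (Complex.exp (θ * Complex.I))⁻¹ := by
    rw [← Complex.exp_neg, Complex.ofReal_mul, Complex.ofReal_cos, Complex.cos]
    push_cast; ring_nf
  have := h.add_inv_cube_sub_three_mul_add_one
  rw [← hcos] at this
  exact_mod_cast this

theorem Int.cube_sub_three_mul_add_one_ne_zero (n : ℤ) : n ^ 3 - 3 * n + 1 ≠ 0 := by
  intro h
  have h2 := congrArg (Int.cast : ℤ → ZMod 2) h
  push_cast at h2
  generalize (n : ZMod 2) = x at h2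
  revert x
  decide

theorem half_int_cube_sub_three_mul_add_one_ne_zero (n : ℤ) :
    ((n : ℝ) / 2) ^ 3 - 3 * ((n : ℝ) / 2) + 1 ≠ 0 := by
  intro h
  have hn : n ^ 3 = 4 * (3 * n - 2) := by
    have : (n : ℝ) ^ 3 = 4 * (3 * n - 2) := by linear_combination 8 * h
    exact_mod_cast this
  obtain ⟨m, rfl⟩ : Even n := by
    have : Even (n ^ 3) := ⟨2 * (3 * n - 2), by rw [hn]; ring⟩
    exact (Int.even_pow.mp this).1
  have : 8 * (m ^ 3 - 3 * m + 1) = 0 := by linear_combination hn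
  exact m.cube_sub_three_mul_add_one_ne_zero (by simpa using this)

/-- Two roots of `x³ - 3x + 1` summing to `n` force a rational root: `n / 2` if they coincide,
and otherwise the third root `-n`. -/
theorem add_ne_intCast_of_cube_sub_three_mul_add_one {a b : ℝ}
    (ha : a ^ 3 - 3 * a + 1 = 0) (hb : b ^ 3 - 3 * b + 1 = 0) (n : ℤ) : a + b ≠ n := by
  intro hab
  by_cases h : a = b
  · apply half_int_cube_sub_three_mul_add_one_ne_zero n
    rw [← hab, h]; linear_combination hb
  · have hfac : (a - b) * (a ^ 2 + a * b + b ^ 2 - 3) = 0 := by linear_combination ha - hb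
    have hq := (mul_eq_zero.mp hfac).resolve_left (sub_ne_zero.mpr h)
    apply (-n).cube_sub_three_mul_add_one_ne_zero
    have : (-(n : ℝ)) ^ 3 - 3 * -(n : ℝ) + 1 = 0 := by
      rw [← hab]; linear_combination (ha + hb - 3 * (a + b) * hq) / 2
    exact_mod_cast this

/-- There are no angles θ₁, θ₂ with e^{iθ₁}, e^{iθ₂} primitive 9th roots of
unity such that 4(1−cos θ₁)(1−cos θ₂) and 2(cos θ₁ + cos θ₂) are both
integers. -/
theorem stmt3 :
    ¬ ∃ θ₁ θ₂ : ℝ,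
      IsPrimitiveRoot (Complex.exp (θ₁ * Complex.I)) 9 ∧
      IsPrimitiveRoot (Complex.exp (θ₂ * Complex.I)) 9 ∧
      (∃ z : ℤ, 4 * (1 - Real.cos θ₁) * (1 - Real.cos θ₂) = (z : ℝ)) ∧
      (∃ z : ℤ, 2 * (Real.cos θ₁ + Real.cos θ₂) = (z : ℝ)) := by
  rintro ⟨θ₁, θ₂, h₁, h₂, -, n, hn⟩
  refine add_ne_intCast_of_cube_sub_three_mul_add_one
    (two_mul_cos_cube_sub_three_mul_add_one h₁) (two_mul_cos_cube_sub_three_mul_add_one h₂) n ?_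
  rw [← hn]; ring
end

section
/- There are no real numbers θ₁, θ₂ such that exp(i·θ₁) and exp(i·θ₂) are primitive 25th roots of unity, 4(1−cos θ₁)(1−cos θ₂) is an integer, and 2(cos θ₁ + cos θ₂) is an integer. -/
open Polynomial


/-- There are no angles θ₁, θ₂ with e^{iθ₁}, e^{iθ₂} primitive 25th roots of
unity such that 4(1−cos θ₁)(1−cos θ₂) and 2(cos θ₁ + cos θ₂) are both
integers. -/
theorem stmt4 :
    ¬ ∃ θ₁ θ₂ : ℝ,
      IsPrimitiveRoot (Complex.exp (θ₁ * Complex.I)) 25 ∧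
      IsPrimitiveRoot (Complex.exp (θ₂ * Complex.I)) 25 ∧
      (∃ z : ℤ, 4 * (1 - Real.cos θ₁) * (1 - Real.cos θ₂) = (z : ℝ)) ∧
      (∃ z : ℤ, 2 * (Real.cos θ₁ + Real.cos θ₂) = (z : ℝ)) := by
  rintro ⟨θ₁, θ₂, h₁, h₂, ⟨z, hz⟩, ⟨w, hw⟩⟩
  set c₁ := Real.cos θ₁
  set c₂ := Real.cos θ₂
  set ζ : ℂ := Complex.exp (θ₁ * Complex.I) with hζdef
  have hζ0 : ζ ≠ 0 := Complex.exp_ne_zero _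
  set p : ℤ := z - 4 + 2 * w with hp
  -- real quadratic for A = 2c₁
  have hq : (2 * c₁)^2 - (w:ℝ) * (2 * c₁) + (p:ℝ) = 0 := by
    push_cast [hp]
    linear_combination (-1) * hz + (2*c₁ - 2) * hw
  have hqC : (2 * (c₁:ℂ))^2 - (w:ℂ) * (2 * (c₁:ℂ)) + (p:ℂ) = 0 := by
    exact_mod_cast congrArg (Complex.ofReal) hq
  -- ζ + ζ⁻¹ = 2 c₁
  have hA : ζ + ζ⁻¹ = 2 * (c₁:ℂ) := by
    rw [hζdef, ← Complex.exp_neg]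
    rw [show -(↑θ₁ * Complex.I) = (-θ₁ : ℝ) * Complex.I by push_cast; ring]
    rw [Complex.exp_mul_I, Complex.exp_mul_I]
    simp only [Complex.ofReal_neg, Complex.cos_neg, Complex.sin_neg]
    have hc : (c₁:ℂ) = Complex.cos (θ₁:ℂ) := Complex.ofReal_cos θ₁
    rw [hc]
    ring
  -- ζ is a root of a degree 4 polynomial over ℚ
  set Q : ℚ[X] := X^4 - C (w:ℚ) * X^3 + C ((p:ℚ)+2) * X^2 - C (w:ℚ) * X + 1 with hQ
  have haeval : aeval ζ Q = 0 := by
    rw [hQ]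
    simp only [map_add, map_sub, map_mul, map_pow, aeval_X, aeval_C, map_one]
    have : ζ^4 - (w:ℂ)*ζ^3 + ((p:ℂ)+2)*ζ^2 - (w:ℂ)*ζ + 1
        = ζ^2 * ((2*(c₁:ℂ))^2 - (w:ℂ)*(2*(c₁:ℂ)) + (p:ℂ)) := by
      rw [← hA]
      field_simp
      ring
    simp only [map_intCast, map_ofNat]
    rw [this, hqC, mul_zero]
  have hQne : Q ≠ 0 := by
    intro h
    have : Q.natDegree = 4 := by rw [hQ]; compute_degree!
    rw [h] at this
    simp at this
  have hdvd : minpoly ℚ ζ ∣ Q := minpoly.dvd ℚ ζ haeval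
  have hmin : Polynomial.cyclotomic 25 ℚ = minpoly ℚ ζ :=
    Polynomial.cyclotomic_eq_minpoly_rat h₁ (by norm_num)
  have hdeg : (minpoly ℚ ζ).natDegree = 20 := by
    rw [← hmin, Polynomial.natDegree_cyclotomic]
    decide
  have hle : (minpoly ℚ ζ).natDegree ≤ Q.natDegree :=
    Polynomial.natDegree_le_of_dvd hdvd hQne
  have hQdeg : Q.natDegree = 4 := by rw [hQ]; compute_degree!
  omega
end

section
/- Let L be a lattice with orthogonal basis elements including E_n, E_{j₁}, E_{j₂}, E_{l₁},…,E_{l_α} (each of square −1, pairwise orthogonal). Suppose S = E_n − E_{l₁} − ⋯ − E_{l_α}, and S₁, S₂ are classes each of the form E_{j_a} − (sum of distinct E-classes with coefficient 1) whose support contains E_n (with coefficient −1), with j₂ < j₁ < n < l_s for all s. If S·S₁ ≥ 0, S·S₂ ≥ 0, and S₁·S₂ ≥ 0, then: each of S₁, S₂ contains at most one of the classes E_{l_s}; S₂ contains E_{j₁}; S₁·S₂ = 0; and the E_{l_s}-classes contained in S₁ and in S₂ (if any) are distinct. Moreover, no third class S₃ of the same form (leading class E_{j₃} with j₃ < n,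 support containing E_n) can satisfy S₁·S₃ ≥ 0 and S₂·S₃ ≥ 0 simultaneously. -/
namespace Stmt13

/-- Intersection number of the classes E_m − Σ_{k∈A} E_k and
E_{m'} − Σ_{k∈A'} E_k in a lattice where the Eᵢ are orthogonal of square −1. -/
def ipE (m : ℕ) (A : Finset ℕ) (m' : ℕ) (A' : Finset ℕ) : ℤ :=
  -(((if m = m' then 1 else 0) : ℤ) - (if m ∈ A' then 1 else 0)
    - (if m' ∈ A then 1 else 0) + ((A ∩ A').card : ℤ))

lemma key {j j' n : ℕ} {A A' : Finset ℕ}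
    (hA : ∀ x ∈ A, j < x) (hA' : ∀ x ∈ A', j' < x)
    (hn : n ∈ A) (hn' : n ∈ A') (h : 0 ≤ ipE j A j' A') :
    A ∩ A' = {n} ∧ ((j ∈ A' ∧ j' ∉ A) ∨ (j' ∈ A ∧ j ∉ A')) := by
  have hc : 1 ≤ ((A ∩ A').card : ℤ) := by
    exact_mod_cast Finset.card_pos.mpr ⟨n, Finset.mem_inter.mpr ⟨hn, hn'⟩⟩
  have hjj' : j ≠ j' := by
    rintro rfl
    have ha : j ∉ A' := fun hm => lt_irrefl j (hA' j hm)
    have hb : j ∉ A := fun hm => lt_irrefl j (hA j hm)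
    unfold ipE at h
    rw [if_pos rfl, if_neg ha, if_neg hb] at h
    omega
  have hnot : ¬ (j ∈ A' ∧ j' ∈ A) := by
    rintro ⟨ha, hb⟩
    exact lt_asymm (hA' j ha) (hA j' hb)
  unfold ipE at h
  rw [if_neg hjj'] at h
  have hcard : ((A ∩ A').card : ℤ) = 1 := by
    split_ifs at h with ha hb hb <;> first | omega | exact absurd ⟨ha, hb⟩ hnot
  have hmem : (j ∈ A' ∧ j' ∉ A) ∨ (j' ∈ A ∧ j ∉ A') := by
    by_cases ha : j ∈ A' <;> by_cases hb : j' ∈ A <;>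
      simp [ha, hb, hcard] at h ⊢ <;> tauto
  refine ⟨?_, hmem⟩
  have hcn : (A ∩ A').card = 1 := by exact_mod_cast hcard
  obtain ⟨a, ha⟩ := Finset.card_eq_one.mp hcn
  have hna : n ∈ ({a} : Finset ℕ) := ha ▸ Finset.mem_inter.mpr ⟨hn, hn'⟩
  simp at hna
  rw [ha, hna]

lemma cardle {n j : ℕ} {Ls A : Finset ℕ} (hLs : ∀ x ∈ Ls, n < x) (hjn : j < n)
    (hn : n ∈ A) (h : 0 ≤ ipE n Ls j A) : (A ∩ Ls).card ≤ 1 := by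
  have hjLs : j ∉ Ls := fun hm => absurd (hLs j hm) (by omega)
  have hne : n ≠ j := by omega
  unfold ipE at h
  rw [if_neg hne, if_pos hn, if_neg hjLs, Finset.inter_comm] at h
  omega

/-- Lemma 4.5: S = E_n − Σ_{l∈Ls} E_l (all l > n), and S₁ = E_{j₁} − Σ_{A₁},
S₂ = E_{j₂} − Σ_{A₂} are classes of the same form with j₂ < j₁ < n whose
supports contain E_n. If all pairwise intersection numbers among S, S₁, S₂
are nonnegative, then each of S₁, S₂ contains at most one of the classes
E_l (l ∈ Ls), S₂ contains E_{j₁}, S₁·S₂ = 0, the E_l-classes contained in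
S₁ and S₂ are distinct, and no third class of the same form with leading
index j₃ < n and support containing E_n can have nonnegative intersection
with both S₁ and S₂. -/
theorem stmt13 (n j₁ j₂ : ℕ) (Ls A₁ A₂ : Finset ℕ)
    (hLs : ∀ x ∈ Ls, n < x) (hj21 : j₂ < j₁) (hj1n : j₁ < n)
    (hA₁ : ∀ x ∈ A₁, j₁ < x) (hA₂ : ∀ x ∈ A₂, j₂ < x)
    (hn1 : n ∈ A₁) (hn2 : n ∈ A₂)
    (h1 : 0 ≤ ipE n Ls j₁ A₁) (h2 : 0 ≤ ipE n Ls j₂ A₂)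
    (h12 : 0 ≤ ipE j₁ A₁ j₂ A₂) :
    (A₁ ∩ Ls).card ≤ 1 ∧ (A₂ ∩ Ls).card ≤ 1 ∧
    j₁ ∈ A₂ ∧ ipE j₁ A₁ j₂ A₂ = 0 ∧ (A₁ ∩ A₂ ∩ Ls = ∅) ∧
    ¬ ∃ (j₃ : ℕ) (A₃ : Finset ℕ), j₃ < n ∧ (∀ x ∈ A₃, j₃ < x) ∧ n ∈ A₃ ∧
        0 ≤ ipE j₁ A₁ j₃ A₃ ∧ 0 ≤ ipE j₂ A₂ j₃ A₃ := by
  obtain ⟨hA12, hmem⟩ := key hA₁ hA₂ hn1 hn2 h12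
  have hj1A2 : j₁ ∈ A₂ := by
    rcases hmem with ⟨h, _⟩ | ⟨h, _⟩
    · exact h
    · exact absurd (hA₁ j₂ h) (by omega)
  have hj2A1 : j₂ ∉ A₁ := fun hm => absurd (hA₁ j₂ hm) (by omega)
  have hnLs : n ∉ Ls := fun hm => lt_irrefl n (hLs n hm)
  refine ⟨cardle hLs hj1n hn1 h1, cardle hLs (lt_trans hj21 hj1n) hn2 h2,
    hj1A2, ?_, ?_, ?_⟩
  · unfold ipE
    rw [if_neg (by omega : j₁ ≠ j₂), if_pos hj1A2, if_neg hj2A1, hA12]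
    simp
  · rw [hA12]
    simp [Finset.singleton_inter_of_notMem hnLs]
  · rintro ⟨j₃, A₃, hj3n, hA₃, hn3, g1, g2⟩
    obtain ⟨h13, hm13⟩ := key hA₁ hA₃ hn1 hn3 g1
    obtain ⟨h23, hm23⟩ := key hA₂ hA₃ hn2 hn3 g2
    rcases hm13 with ⟨hj1A3, _⟩ | ⟨hj3A1, _⟩
    · have : j₁ ∈ A₂ ∩ A₃ := Finset.mem_inter.mpr ⟨hj1A2, hj1A3⟩
      rw [h23] at this
      simp at this
      omega
    · rcases hm23 with ⟨hj2A3, _⟩ | ⟨hj3A2, _⟩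
      · exact absurd (hA₃ j₂ hj2A3) (by have := hA₁ j₃ hj3A1; omega)
      · have : j₃ ∈ A₁ ∩ A₂ := Finset.mem_inter.mpr ⟨hj3A1, hj3A2⟩
        rw [hA12] at this
        simp at this
        omega

end Stmt13
end

section
/- Suppose a finite cyclic group Z_n acts on a finite set S of 9 elements (respectively 5 elements) via a subgroup H₂ of order 5 (respectively a subgroup H₁ of order 3). Then: an order-5 group acting on a 9-element set fixes exactly 4 elements if all nonfree orbits are fixed points (orbits have size 1 or 5, and 9 = 5 + 4 forces exactly one free orbit and 4 fixed points); and an order-3 group acting on a 5-element set fixes either 2 or 5 elements (5 = 3k + f with f ∈ {2, 5}). In particular, there are no commuting actions of H₁ (order 3) and H₂ (order 5) on sets S₁ (|S₁| = 9) and S₂ (|S₂| = 5) with S₁ ∩ S₂ realized consistently: 4 ≠ 2 and 4 ≠ 5, a contradiction. -/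
/-- A group of order 5 acting nontrivially on a set of 9 elements fixes
exactly 4 elements; a group of order 3 acting on a set of 5 elements fixes
either 2 or 5 elements; and 4 ≠ 2, 4 ≠ 5, so the two fixed-point counts
cannot agree — the contradiction of Lemma 2.5. -/
theorem stmt19 (G₂ S₁ G₁ S₂ : Type*)
    [Group G₂] [Fintype G₂] [MulAction G₂ S₁] [Fintype S₁]
    [Group G₁] [Fintype G₁] [MulAction G₁ S₂] [Fintype S₂]
    (h5 : Fintype.card G₂ = 5) (h9 : Fintype.card S₁ = 9)
    (hnt : ∃ (g : G₂) (x : S₁), g • x ≠ x)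
    (h3 : Fintype.card G₁ = 3) (h5' : Fintype.card S₂ = 5) :
    Nat.card (MulAction.fixedPoints G₂ S₁) = 4 ∧
    (Nat.card (MulAction.fixedPoints G₁ S₂) = 2 ∨
      Nat.card (MulAction.fixedPoints G₁ S₂) = 5) ∧
    (4 : ℕ) ≠ 2 ∧ (4 : ℕ) ≠ 5 := by
  have hfact5 : Fact (Nat.Prime 5) := ⟨by norm_num⟩
  have hfact3 : Fact (Nat.Prime 3) := ⟨by norm_num⟩
  have hp5 : IsPGroup 5 G₂ := IsPGroup.of_card (n := 1) (by simp [h5])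
  have hp3 : IsPGroup 3 G₁ := IsPGroup.of_card (n := 1) (by simp [h3])
  have hm5 := hp5.card_modEq_card_fixedPoints S₁
  have hm3 := hp3.card_modEq_card_fixedPoints S₂
  rw [Nat.card_eq_fintype_card, h9] at hm5
  rw [Nat.card_eq_fintype_card, h5'] at hm3
  have hle5 : Nat.card (MulAction.fixedPoints G₂ S₁) ≤ 9 := by
    rw [← h9, ← Nat.card_eq_fintype_card]
    exact Nat.card_le_card_of_injective _ Subtype.val_injective
  have hle3 : Nat.card (MulAction.fixedPoints G₁ S₂) ≤ 5 := by
    rw [← h5', ← Nat.card_eq_fintype_card]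
    exact Nat.card_le_card_of_injective _ Subtype.val_injective
  have hne9 : Nat.card (MulAction.fixedPoints G₂ S₁) ≠ 9 := by
    intro h
    obtain ⟨g, x, hx⟩ := hnt
    have hbij : Function.Bijective ((↑) : MulAction.fixedPoints G₂ S₁ → S₁) := by
      rw [Nat.bijective_iff_injective_and_card]
      exact ⟨Subtype.val_injective, by rw [Nat.card_eq_fintype_card (α := S₁), h9, h]⟩
    obtain ⟨⟨y, hy⟩, rfl⟩ := hbij.surjective x
    exact hx (hy g)
  have hmod5 : 9 % 5 = Nat.card (MulAction.fixedPoints G₂ S₁) % 5 := hm5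
  have hmod3 : 5 % 3 = Nat.card (MulAction.fixedPoints G₁ S₂) % 3 := hm3
  refine ⟨by omega, by omega, by omega, by omega⟩
end
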